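/- Let n ≥ 1, let ρ be a positive semidefinite 2ⁿ×2ⁿ complex matrix with tr(ρ) = 1, and let O be a Hermitian 2ⁿ×2ⁿ complex matrix with tr(O) = 0. Define 𝒞⁽ⁱⁱ⁾ = Σ_{x,y ∈ {0,1}ⁿ} ( |y x x⟩ + |x y x⟩ + |x x y⟩ )( ⟨y x x| + ⟨x y x| + ⟨x x y| ), a matrix indexed by triples of bit strings. Then | tr( 𝒞⁽ⁱⁱ⁾ (ρ ⊗ O ⊗ O) ) | ≤ 7 tr(O²). -/

import Mathlib

open Finset Matrix
open scoped ComplexOrder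

/-- Bit strings of length `n`. -/
abbrev Bits (n : ℕ) := Fin n → Fin 2

/-- Triples of bit strings. -/
abbrev Bits3 (n : ℕ) := Bits n × Bits n × Bits n

/-- The standard basis vector `|a b c⟩` of `ℂ^{({0,1}ⁿ)³}`. -/
def ket3 {n : ℕ} (a b c : Bits n) : Bits3 n → ℂ :=
  fun p => if p = (a, b, c) then 1 else 0

/-- The Kronecker product `P ⊗ Q ⊗ R`, a matrix indexed by triples of bit strings. -/
def kron3 {ι : Type*} (P Q R : Matrix ι ι ℂ) : Matrix (ι × ι × ι) (ι × ι × ι) ℂ :=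
  Matrix.of fun p q => P p.1 q.1 * Q p.2.1 q.2.1 * R p.2.2 q.2.2

/-- The matrix `𝒞⁽ⁱⁱ⁾ = Σ_{x,y} (|yxx⟩+|xyx⟩+|xxy⟩)(⟨yxx|+⟨xyx|+⟨xxy|)`. -/
noncomputable def Cii (n : ℕ) : Matrix (Bits3 n) (Bits3 n) ℂ :=
  ∑ x : Bits n, ∑ y : Bits n,
    Matrix.vecMulVec (ket3 y x x + ket3 x y x + ket3 x x y)
      (ket3 y x x + ket3 x y x + ket3 x x y)

/-! The trace expands, matrix element by matrix element, into
`∑ₓ (tr ρ · Oₓₓ² + 2 Oₓₓ ((Oρ)ₓₓ + (ρO)ₓₓ) + 2 ρₓₓ ((O²)ₓₓ + Oₓₓ tr O))`.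
With `tr ρ = 1` and `tr O = 0` each summand is at most `7 (O²)ₓₓ = 7 ∑ᵧ |Oₓᵧ|²`: besides the trivial
`|Oₓₓ|² ≤ (O²)ₓₓ` and `0 ≤ ρₓₓ ≤ 1`, Cauchy–Schwarz and the `2 × 2` minor bound
`|ρᵧₓ|² ≤ ρᵧᵧ ρₓₓ` give `|(Oρ)ₓₓ|² ≤ (O²)ₓₓ ρₓₓ ≤ (O²)ₓₓ`, and `(ρO)ₓₓ` is the conjugate of
`(Oρ)ₓₓ`. -/

lemma Matrix.trace_vecMulVec_mul {ι R : Type*} [Fintype ι] [CommSemiring R]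
    (u v : ι → R) (M : Matrix ι ι R) :
    (vecMulVec u v * M).trace = v ⬝ᵥ (M *ᵥ u) := by
  rw [vecMulVec_mul, trace_vecMulVec, dotProduct_comm, dotProduct_mulVec]

lemma ket3_dotProduct_kron3_mulVec_ket3 {n : ℕ} (P Q R : Matrix (Bits n) (Bits n) ℂ)
    (a b c d e f : Bits n) :
    ket3 a b c ⬝ᵥ (kron3 P Q R *ᵥ ket3 d e f) = P a d * Q b e * R c f := by
  simp [ket3, dotProduct, mulVec, kron3, Fintype.sum_prod_type, Prod.ext_iff, ite_and]

lemma trace_Cii_mul_kron3 {n : ℕ} (ρ O : Matrix (Bits n) (Bits n) ℂ) :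
    (Cii n * kron3 ρ O O).trace = ∑ x, (ρ.trace * O x x ^ 2
      + 2 * O x x * ((O * ρ) x x + (ρ * O) x x) + 2 * ρ x x * ((O * O) x x + O x x * O.trace)) := by
  simp only [Cii, sum_mul, trace_sum, trace_vecMulVec_mul, mulVec_add, dotProduct_add,
    add_dotProduct, ket3_dotProduct_kron3_mulVec_ket3]
  refine sum_congr rfl fun x _ => ?_
  simp only [trace, Matrix.diag, mul_apply, mul_add, mul_sum, sum_mul, ← sum_add_distrib]
  exact sum_congr rfl fun y _ => by ring

lemma norm_mul_apply_sq_le {𝕜 l m n : Type*} [RCLike 𝕜] [Fintype m]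
    (A : Matrix l m 𝕜) (B : Matrix m n 𝕜) (i : l) (k : n) :
    ‖(A * B) i k‖ ^ 2 ≤ (∑ j, ‖A i j‖ ^ 2) * ∑ j, ‖B j k‖ ^ 2 := by
  calc ‖(A * B) i k‖ ^ 2 ≤ (∑ j, ‖A i j‖ * ‖B j k‖) ^ 2 := by
        gcongr
        exact (norm_sum_le _ _).trans_eq (sum_congr rfl fun j _ => norm_mul _ _)
    _ ≤ _ := sum_mul_sq_le_sq_mul_sq _ _ _

section PosSemidef
variable {𝕜 ι : Type*} [RCLike 𝕜] {A : Matrix ι ι 𝕜}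

lemma Matrix.PosSemidef.norm_apply_sq_le [DecidableEq ι] (hA : A.PosSemidef) (i j : ι) :
    ‖A i j‖ ^ 2 ≤ RCLike.re (A i i) * RCLike.re (A j j) := by
  have hdet := (hA.submatrix ![i, j]).det_nonneg
  simp only [det_fin_two, submatrix_apply, Matrix.cons_val_zero, Matrix.cons_val_one] at hdet
  rw [← hA.isHermitian.apply i j, RCLike.star_def, RCLike.conj_mul,
    ← hA.isHermitian.coe_re_apply_self i, ← hA.isHermitian.coe_re_apply_self j, ← RCLike.ofReal_mul,
    ← RCLike.ofReal_pow, ← RCLike.ofReal_sub, RCLike.ofReal_nonneg, sub_nonneg] at hdet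
  rwa [← hA.isHermitian.apply i j, norm_star]

lemma Matrix.PosSemidef.sum_norm_apply_sq_le [Fintype ι] [DecidableEq ι] (hA : A.PosSemidef)
    (i : ι) :
    ∑ j, ‖A j i‖ ^ 2 ≤ RCLike.re A.trace * RCLike.re (A i i) := by
  calc ∑ j, ‖A j i‖ ^ 2 ≤ ∑ j, RCLike.re (A j j) * RCLike.re (A i i) :=
        sum_le_sum fun j _ => hA.norm_apply_sq_le j i
    _ = RCLike.re A.trace * RCLike.re (A i i) := by
        rw [← sum_mul, trace, map_sum]; rfl

lemma Matrix.PosSemidef.re_apply_le_re_trace [Fintype ι] (hA : A.PosSemidef) (i : ι) :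
    RCLike.re (A i i) ≤ RCLike.re A.trace := by
  rw [trace, map_sum]
  exact single_le_sum (f := fun j => RCLike.re (A j j))
    (fun j _ => RCLike.nonneg_iff.mp hA.diag_nonneg |>.1) (mem_univ i)

lemma Matrix.PosSemidef.norm_mul_apply_self_sq_le [Fintype ι] [DecidableEq ι]
    (hA : A.PosSemidef) (B : Matrix ι ι 𝕜) (i : ι) :
    ‖(B * A) i i‖ ^ 2 ≤ RCLike.re A.trace * RCLike.re (A i i) * ∑ j, ‖B i j‖ ^ 2 := by
  calc ‖(B * A) i i‖ ^ 2 ≤ (∑ j, ‖B i j‖ ^ 2) * ∑ j, ‖A j i‖ ^ 2 := norm_mul_apply_sq_le B A i i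
    _ ≤ (∑ j, ‖B i j‖ ^ 2) * (RCLike.re A.trace * RCLike.re (A i i)) := by
        gcongr
        exact hA.sum_norm_apply_sq_le i
    _ = _ := mul_comm _ _

end PosSemidef

section Hermitian
variable {𝕜 ι : Type*} [RCLike 𝕜] [Fintype ι] {A B : Matrix ι ι 𝕜}

lemma Matrix.IsHermitian.mul_self_apply_self (hA : A.IsHermitian) (i : ι) :
    (A * A) i i = ((∑ j, ‖A i j‖ ^ 2 : ℝ) : 𝕜) := by
  rw [mul_apply, RCLike.ofReal_sum]
  refine sum_congr rfl fun j _ => ?_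
  rw [← hA.apply i j, RCLike.star_def, RCLike.norm_conj, RCLike.conj_mul, RCLike.ofReal_pow]

lemma Matrix.IsHermitian.mul_apply_self_eq_star (hA : A.IsHermitian) (hB : B.IsHermitian)
    (i : ι) : (A * B) i i = star ((B * A) i i) := by
  rw [← conjTranspose_apply, conjTranspose_mul, hA.eq, hB.eq]

end Hermitian

lemma norm_Cii_summand_le {ι : Type*} [Fintype ι] [DecidableEq ι] {ρ O : Matrix ι ι ℂ}
    (hρ : ρ.PosSemidef) (hρtr : ρ.trace = 1) (hO : O.IsHermitian) (x : ι) :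
    ‖O x x ^ 2 + 2 * O x x * ((O * ρ) x x + (ρ * O) x x) + 2 * ρ x x * (O * O) x x‖
      ≤ 7 * ∑ y, ‖O x y‖ ^ 2 := by
  rw [hO.mul_self_apply_self]
  set c := ∑ y, ‖O x y‖ ^ 2
  have hc : 0 ≤ c := sum_nonneg fun y _ => sq_nonneg _
  have hdiag : ‖O x x‖ ^ 2 ≤ c := single_le_sum (f := fun y => ‖O x y‖ ^ 2)
    (fun y _ => sq_nonneg _) (mem_univ x)
  have hρxx_re : RCLike.re (ρ x x) ≤ 1 := by simpa [hρtr] using hρ.re_apply_le_re_trace x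
  have hρxx : ‖ρ x x‖ ≤ 1 := by
    rwa [← hρ.isHermitian.coe_re_apply_self x, RCLike.norm_ofReal,
      abs_of_nonneg (RCLike.nonneg_iff.mp hρ.diag_nonneg).1]
  have hOρ : ‖(O * ρ) x x‖ ^ 2 ≤ c := by
    refine (hρ.norm_mul_apply_self_sq_le O x).trans ?_
    rw [hρtr, RCLike.one_re, one_mul]
    exact mul_le_of_le_one_left hc hρxx_re
  have hρO : ‖(ρ * O) x x‖ = ‖(O * ρ) x x‖ := by
    rw [hρ.isHermitian.mul_apply_self_eq_star hO, norm_star]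
  calc _ ≤ ‖O x x‖ ^ 2 + 2 * ‖O x x‖ * (‖(O * ρ) x x‖ + ‖(ρ * O) x x‖) + 2 * ‖ρ x x‖ * c := by
        refine (norm_add₃_le ..).trans ?_
        simp only [norm_pow, norm_mul, Complex.norm_ofNat,
          RCLike.norm_ofReal, abs_of_nonneg hc]
        gcongr
        exact norm_add_le _ _
    _ ≤ 7 * c := by
        rw [hρO]
        nlinarith [sq_nonneg (‖O x x‖ - ‖(O * ρ) x x‖), mul_le_mul_of_nonneg_right hρxx hc]

theorem Cii_bound (n : ℕ)
    (ρ O : Matrix (Bits n) (Bits n) ℂ)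
    (hρ : ρ.PosSemidef) (hρtr : ρ.trace = 1)
    (hO : O.IsHermitian) (hOtr : O.trace = 0) :
    ‖(Cii n * kron3 ρ O O).trace‖ ≤ 7 * ((O * O).trace).re := by
  rw [trace_Cii_mul_kron3, hρtr, hOtr]
  simp only [one_mul, mul_zero, add_zero]
  calc _ ≤ ∑ x, 7 * ∑ y, ‖O x y‖ ^ 2 :=
        (norm_sum_le _ _).trans (sum_le_sum fun x _ => norm_Cii_summand_le hρ hρtr hO x)
    _ = 7 * ((O * O).trace).re := by
        simp only [trace, Matrix.diag, hO.mul_self_apply_self, ← mul_sum, Complex.re_sum]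
        norm_cast
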